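/- The 4×4 Hermitian matrix ρ with ρ₀₀ = a₀² + a₂²/6, ρ₀₃ = ρ₃₀ = a₂(a₀+a₄)/√6, ρ₁₁=ρ₁₂=ρ₂₁=ρ₂₂ = a₂²/3, ρ₃₃ = a₄² + a₂²/6 (zeros elsewhere), where a₀²+a₂²+a₄²=1, has eigenvalues λ₁ = 0, λ₂ = 2a₂²/3, and λ_{3,4} = [(a₀² + a₄² + a₂²/3) ± sqrt((a₀+a₄)²((a₀−a₄)² + 2a₂²/3))]/2. -/

import Mathlib

open Matrix Complex

section EigAux

open Polynomial

variable {n : Type*} [Fintype n] [DecidableEq n]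

lemma my_charpoly_conj (U D : Matrix n n ℂ) (hU : U ∈ Matrix.unitaryGroup n ℂ) :
    (U * D * star U).charpoly = D.charpoly := by
  have h1 : U * star U = 1 := (Matrix.mem_unitaryGroup_iff).mp hU
  have h2 : star U * U = 1 := (Matrix.mem_unitaryGroup_iff').mp hU
  have hmap : ∀ A B : Matrix n n ℂ, ((A * B).map (C : ℂ →+* ℂ[X]) : Matrix n n ℂ[X])
      = A.map C * B.map C := fun A B => Matrix.map_mul
  have hsc : Matrix.scalar n (X : ℂ[X]) * U.map C = U.map C * Matrix.scalar n (X : ℂ[X]) :=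
    (Matrix.scalar_commute _ (fun r' => Commute.all _ _) _).eq
  have hone : U.map (C : ℂ →+* ℂ[X]) * (star U).map C = 1 := by
    rw [← hmap, h1]; simp
  have key : charmatrix (U * D * star U) = U.map C * charmatrix D * (star U).map C := by
    rw [charmatrix, charmatrix, RingHom.mapMatrix_apply, RingHom.mapMatrix_apply, hmap, hmap,
      mul_sub, sub_mul]
    congr 1
    rw [← hsc, mul_assoc, hone, mul_one]
  unfold Matrix.charpoly
  rw [key, det_mul, det_mul, mul_comm, ← mul_assoc, ← det_mul, ← hmap, h2]
  simp

lemma my_herm_charpoly (A : Matrix n n ℂ) (hA : A.IsHermitian) :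
    A.charpoly = ∏ i, (X - C (hA.eigenvalues i : ℂ)) := by
  conv_lhs => rw [hA.spectral_theorem, Unitary.conjStarAlgAut_apply, my_charpoly_conj _ _ hA.eigenvectorUnitary.2]
  have hch : charmatrix (Matrix.diagonal (RCLike.ofReal ∘ hA.eigenvalues) : Matrix n n ℂ)
      = Matrix.diagonal (fun i => X - C (hA.eigenvalues i : ℂ)) := by
    ext i j
    by_cases h : i = j
    · subst h; simp
    · simp [h, charmatrix_apply_ne _ _ _ h, Matrix.diagonal_apply_ne _ h]
  rw [Matrix.charpoly, hch, Matrix.det_diagonal]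

lemma my_herm_roots (A : Matrix n n ℂ) (hA : A.IsHermitian) :
    A.charpoly.roots = Finset.univ.val.map (fun i => (hA.eigenvalues i : ℂ)) := by
  rw [my_herm_charpoly A hA, Finset.prod,
    show (fun i => X - C ((hA.eigenvalues i : ℝ) : ℂ))
      = (fun a => X - C a) ∘ (fun i => ((hA.eigenvalues i : ℝ) : ℂ)) from rfl,
    ← Multiset.map_map]
  exact roots_multiset_prod_X_sub_C _

end EigAux

noncomputable def B4 (p q r s : ℂ) : Matrix (Fin 4) (Fin 4) ℂ :=
  !![p, 0, 0, q; 0, r, r, 0; 0, r, r, 0; q, 0, 0, s]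

open Polynomial in
set_option maxHeartbeats 2000000 in
lemma B4_charpoly (p q r s : ℂ) :
    (B4 p q r s).charpoly
      = X * (X - C (2 * r)) * (X ^ 2 - C (p + s) * X + C (p * s - q ^ 2)) := by
  have hch : charmatrix (B4 p q r s)
      = !![X - C p, 0, 0, -C q; 0, X - C r, -C r, 0;
           0, -C r, X - C r, 0; -C q, 0, 0, X - C s] := by
    refine Matrix.ext fun i j => ?_
    fin_cases i <;> fin_cases j <;> simp [B4, charmatrix_apply]
  rw [Matrix.charpoly, hch]
  rw [Matrix.det_succ_row_zero]
  simp (config := { decide := true }) [Matrix.det_fin_three, Fin.sum_univ_succ, Fin.succAbove,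
    Matrix.submatrix_apply, Fin.castSucc, Fin.castAdd, Fin.castLE]
  apply Polynomial.funext
  intro x
  simp only [eval_add, eval_sub, eval_mul, eval_neg, eval_X, eval_C, eval_zero, eval_pow,
    eval_one, eval_smul, smul_eq_mul]
  ring

/-- The 4×4 Hermitian matrix (two-qubit RDM of a symmetric state), in the basis
`|00⟩,|01⟩,|10⟩,|11⟩`. -/
noncomputable def targetRDM (a₀ a₂ a₄ : ℝ) :
    Matrix (Fin 2 × Fin 2) (Fin 2 × Fin 2) ℂ :=
  fun a b =>
    if a = (0, 0) ∧ b = (0, 0) then ((a₀ ^ 2 + a₂ ^ 2 / 6 : ℝ) : ℂ)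
    else if (a = (0, 0) ∧ b = (1, 1)) ∨ (a = (1, 1) ∧ b = (0, 0)) then
      ((a₂ * (a₀ + a₄) / Real.sqrt 6 : ℝ) : ℂ)
    else if a = (1, 1) ∧ b = (1, 1) then ((a₄ ^ 2 + a₂ ^ 2 / 6 : ℝ) : ℂ)
    else if (a = (0, 1) ∨ a = (1, 0)) ∧ (b = (0, 1) ∨ b = (1, 0)) then
      ((a₂ ^ 2 / 3 : ℝ) : ℂ)
    else 0

open Polynomial in
lemma reindex_target (a₀ a₂ a₄ : ℝ) :
    Matrix.reindex (finProdFinEquiv : Fin 2 × Fin 2 ≃ Fin 4) finProdFinEquiv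
        (targetRDM a₀ a₂ a₄)
      = B4 ((a₀ ^ 2 + a₂ ^ 2 / 6 : ℝ) : ℂ) ((a₂ * (a₀ + a₄) / Real.sqrt 6 : ℝ) : ℂ)
          ((a₂ ^ 2 / 3 : ℝ) : ℂ) ((a₄ ^ 2 + a₂ ^ 2 / 6 : ℝ) : ℂ) := by
  have h0 : (finProdFinEquiv : Fin 2 × Fin 2 ≃ Fin 4).symm 0 = (0,0) := by decide
  have h1 : (finProdFinEquiv : Fin 2 × Fin 2 ≃ Fin 4).symm 1 = (0,1) := by decide
  have h2 : (finProdFinEquiv : Fin 2 × Fin 2 ≃ Fin 4).symm 2 = (1,0) := by decide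
  have h3 : (finProdFinEquiv : Fin 2 × Fin 2 ≃ Fin 4).symm 3 = (1,1) := by decide
  refine Matrix.ext fun i j => ?_
  fin_cases i <;> fin_cases j <;>
    simp [targetRDM, B4, Matrix.reindex_apply, Matrix.submatrix_apply, h0, h1, h2, h3,
      Prod.ext_iff]

/-- The eigenvalues of the two-qubit RDM of the symmetric state are
`0`, `2a₂²/3`, and `[(a₀² + a₄² + a₂²/3) ± √((a₀+a₄)²((a₀−a₄)² + 2a₂²/3))]/2`. -/
theorem targetRDM_eigenvalues (a₀ a₂ a₄ : ℝ)
    (hnorm : a₀ ^ 2 + a₂ ^ 2 + a₄ ^ 2 = 1)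
    (hherm : (targetRDM a₀ a₂ a₄).IsHermitian) :
    Finset.univ.val.map hherm.eigenvalues =
      ({0, 2 * a₂ ^ 2 / 3,
        ((a₀ ^ 2 + a₄ ^ 2 + a₂ ^ 2 / 3)
          + Real.sqrt ((a₀ + a₄) ^ 2 * ((a₀ - a₄) ^ 2 + 2 * a₂ ^ 2 / 3))) / 2,
        ((a₀ ^ 2 + a₄ ^ 2 + a₂ ^ 2 / 3)
          - Real.sqrt ((a₀ + a₄) ^ 2 * ((a₀ - a₄) ^ 2 + 2 * a₂ ^ 2 / 3))) / 2} :
        Multiset ℝ) := by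
  classical
  set t : ℝ := a₀ ^ 2 + a₄ ^ 2 + a₂ ^ 2 / 3 with hT
  set D : ℝ := (a₀ + a₄) ^ 2 * ((a₀ - a₄) ^ 2 + 2 * a₂ ^ 2 / 3) with hDdef
  have hD : 0 ≤ D := by positivity
  have hu : Real.sqrt D ^ 2 = D := Real.sq_sqrt hD
  have h6 : Real.sqrt 6 ^ 2 = 6 := Real.sq_sqrt (by norm_num)
  have h6ne : (Real.sqrt 6 : ℂ) ≠ 0 := by
    simp only [ne_eq, Complex.ofReal_eq_zero]
    positivity
  -- the charpoly of the matrix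
  have hcp : (targetRDM a₀ a₂ a₄).charpoly
      = Polynomial.X * (Polynomial.X - Polynomial.C (((2 * a₂ ^ 2 / 3 : ℝ)) : ℂ))
        * (Polynomial.X ^ 2 - Polynomial.C ((t : ℝ) : ℂ) * Polynomial.X
            + Polynomial.C ((((t ^ 2 - D) / 4 : ℝ)) : ℂ)) := by
    rw [← Matrix.charpoly_reindex (finProdFinEquiv : Fin 2 × Fin 2 ≃ Fin 4),
      reindex_target, B4_charpoly]
    have e1 : (2 : ℂ) * ((a₂ ^ 2 / 3 : ℝ) : ℂ) = ((2 * a₂ ^ 2 / 3 : ℝ) : ℂ) := by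
      push_cast; ring
    have e2 : ((a₀ ^ 2 + a₂ ^ 2 / 6 : ℝ) : ℂ) + ((a₄ ^ 2 + a₂ ^ 2 / 6 : ℝ) : ℂ)
        = ((t : ℝ) : ℂ) := by
      rw [hT]; push_cast; ring
    have e3 : ((a₀ ^ 2 + a₂ ^ 2 / 6 : ℝ) : ℂ) * ((a₄ ^ 2 + a₂ ^ 2 / 6 : ℝ) : ℂ)
        - ((a₂ * (a₀ + a₄) / Real.sqrt 6 : ℝ) : ℂ) ^ 2 = (((t ^ 2 - D) / 4 : ℝ) : ℂ) := by
      have hq2 : (a₂ * (a₀ + a₄) / Real.sqrt 6) ^ 2 = a₂ ^ 2 * (a₀ + a₄) ^ 2 / 6 := by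
        rw [div_pow, mul_pow, h6]
      rw [hT, hDdef, ← Complex.ofReal_pow, hq2]
      push_cast
      ring
    rw [e1, e2, e3]
  -- roots of the charpoly
  have hroots : (targetRDM a₀ a₂ a₄).charpoly.roots
      = Finset.univ.val.map (fun i => ((hherm.eigenvalues i : ℝ) : ℂ)) :=
    my_herm_roots _ hherm
  -- the explicit factorization
  have hfact : (targetRDM a₀ a₂ a₄).charpoly
      = (Multiset.map (fun a : ℂ => Polynomial.X - Polynomial.C a)
          (({0, ((2 * a₂ ^ 2 / 3 : ℝ) : ℂ), (((t + Real.sqrt D) / 2 : ℝ) : ℂ),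
            (((t - Real.sqrt D) / 2 : ℝ) : ℂ)} : Multiset ℂ))).prod := by
    rw [hcp]
    simp only [Multiset.insert_eq_cons, Multiset.map_cons, Multiset.map_singleton,
      Multiset.prod_cons, Multiset.prod_singleton]
    have hsum : (((t + Real.sqrt D) / 2 : ℝ) : ℂ) + (((t - Real.sqrt D) / 2 : ℝ) : ℂ)
        = ((t : ℝ) : ℂ) := by push_cast; ring
    have hprod : (((t + Real.sqrt D) / 2 : ℝ) : ℂ) * (((t - Real.sqrt D) / 2 : ℝ) : ℂ)
        = (((t ^ 2 - D) / 4 : ℝ) : ℂ) := by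
      have hu' : ((Real.sqrt D : ℝ) : ℂ) ^ 2 = ((D : ℝ) : ℂ) := by
        rw [← Complex.ofReal_pow, hu]
      push_cast
      linear_combination (-(1/4) : ℂ) * hu'
    calc Polynomial.X * (Polynomial.X - Polynomial.C (((2 * a₂ ^ 2 / 3 : ℝ)) : ℂ))
          * (Polynomial.X ^ 2 - Polynomial.C ((t : ℝ) : ℂ) * Polynomial.X
              + Polynomial.C ((((t ^ 2 - D) / 4 : ℝ)) : ℂ))
        = Polynomial.X * (Polynomial.X - Polynomial.C (((2 * a₂ ^ 2 / 3 : ℝ)) : ℂ))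
          * (Polynomial.X ^ 2
              - Polynomial.C ((((t + Real.sqrt D) / 2 : ℝ) : ℂ)
                  + (((t - Real.sqrt D) / 2 : ℝ) : ℂ)) * Polynomial.X
              + Polynomial.C ((((t + Real.sqrt D) / 2 : ℝ) : ℂ)
                  * (((t - Real.sqrt D) / 2 : ℝ) : ℂ))) := by rw [hsum, hprod]
      _ = (Polynomial.X - Polynomial.C 0)
            * ((Polynomial.X - Polynomial.C (((2 * a₂ ^ 2 / 3 : ℝ)) : ℂ))
            * ((Polynomial.X - Polynomial.C ((((t + Real.sqrt D) / 2 : ℝ)) : ℂ))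
            * (Polynomial.X - Polynomial.C ((((t - Real.sqrt D) / 2 : ℝ)) : ℂ)))) := by
          simp only [map_add, _root_.map_mul, map_zero]
          ring
  have hroots2 : (targetRDM a₀ a₂ a₄).charpoly.roots
      = ({0, ((2 * a₂ ^ 2 / 3 : ℝ) : ℂ), (((t + Real.sqrt D) / 2 : ℝ) : ℂ),
          (((t - Real.sqrt D) / 2 : ℝ) : ℂ)} : Multiset ℂ) := by
    rw [hfact]
    exact Polynomial.roots_multiset_prod_X_sub_C _
  apply Multiset.map_injective (f := (Complex.ofReal : ℝ → ℂ)) Complex.ofReal_injective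
  rw [Multiset.map_map]
  have : ((Complex.ofReal : ℝ → ℂ) ∘ hherm.eigenvalues)
      = fun i => ((hherm.eigenvalues i : ℝ) : ℂ) := rfl
  rw [this, ← hroots, hroots2]
  simp only [Multiset.insert_eq_cons, Multiset.map_cons, Multiset.map_singleton,
    Complex.ofReal_zero]
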